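/- arXiv:0707.1761 — 2 statements merged into one kernel-verified Lean document; each statement's English description precedes it below -/
import Mathlib

section
/- For every natural number m, μ⁰(4m+3) − μᵉ(4m+3) = (−1)^{s₂(m)}, where s₂(m) denotes the number of 1's in the binary expansion of m. -/
/-- `s2 m` is the number of 1's in the binary expansion of `m` (binary digit sum). -/
def s2 (m : ℕ) : ℕ := (Nat.digits 2 m).sum

/-- A natural number is *odious* if the number of 1's in its binary expansion is odd. -/
def Odious (m : ℕ) : Prop := Odd (s2 m)

/-- A natural number is *evil* if the number of 1's in its binary expansion is even. -/
def Evil (m : ℕ) : Prop := Even (s2 m)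

instance : DecidablePred Odious := fun m => inferInstanceAs (Decidable (Odd (s2 m)))
instance : DecidablePred Evil := fun m => inferInstanceAs (Decidable (Even (s2 m)))

/-- `muOdious n` = μ⁰(n): the number of odd odious integers in `[0, n)`. -/
def muOdious (n : ℕ) : ℕ := ((Finset.range n).filter (fun m => Odd m ∧ Odious m)).card

/-- `muEvil n` = μᵉ(n): the number of odd evil integers in `[0, n)`. -/
def muEvil (n : ℕ) : ℕ := ((Finset.range n).filter (fun m => Odd m ∧ Evil m)).card

/-- `deltaOdd3 i n` = Δ^{odd}_{3,i}(n): the number of odd odious integers `m ∈ [0, n)` with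
`m ≡ i (mod 3)` minus the number of odd evil integers `m ∈ [0, n)` with `m ≡ i (mod 3)`. -/
def deltaOdd3 (i n : ℕ) : ℤ :=
  (((Finset.range n).filter (fun m => Odd m ∧ m % 3 = i ∧ Odious m)).card : ℤ) -
  (((Finset.range n).filter (fun m => Odd m ∧ m % 3 = i ∧ Evil m)).card : ℤ)

/-- `delta3 N` = Δ₃([0, N)): the number of evil multiples of 3 in `[0, N)` minus the number of
odious multiples of 3 in `[0, N)`. -/
def delta3 (N : ℕ) : ℤ :=
  (((Finset.range N).filter (fun m => 3 ∣ m ∧ Evil m)).card : ℤ) -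
  (((Finset.range N).filter (fun m => 3 ∣ m ∧ Odious m)).card : ℤ)

/-- `deltaOdd3All n` = Δ^{odd}₃([0, n)): the number of odd evil multiples of 3 in `[0, n)`
minus the number of odd odious multiples of 3 in `[0, n)`. -/
def deltaOdd3All (n : ℕ) : ℤ :=
  (((Finset.range n).filter (fun m => Odd m ∧ 3 ∣ m ∧ Evil m)).card : ℤ) -
  (((Finset.range n).filter (fun m => Odd m ∧ 3 ∣ m ∧ Odious m)).card : ℤ)

lemma s2_two_mul (n : ℕ) : s2 (2 * n) = s2 n := by
  rcases Nat.eq_zero_or_pos n with h | h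
  · simp [h, s2]
  · unfold s2
    rw [Nat.digits_def' (by norm_num : 1 < 2) (by omega)]
    have h1 : (2*n) % 2 = 0 := by omega
    have h2 : (2*n) / 2 = n := by omega
    rw [h1, h2]; simp

lemma s2_two_mul_add_one (n : ℕ) : s2 (2 * n + 1) = s2 n + 1 := by
  unfold s2
  rw [Nat.digits_def' (by norm_num : 1 < 2) (by omega)]
  have h1 : (2*n+1) % 2 = 1 := by omega
  have h2 : (2*n+1) / 2 = n := by omega
  rw [h1, h2]; simp [Nat.add_comm]

lemma filter_range_succ_card (P : ℕ → Prop) [DecidablePred P] (n : ℕ) :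
    ((Finset.range (n+1)).filter P).card
      = ((Finset.range n).filter P).card + if P n then 1 else 0 := by
  rw [Finset.range_add_one, Finset.filter_insert]
  split_ifs with h
  · rw [Finset.card_insert_of_notMem (by simp)]
  · simp

/-- For every natural number `m`, μ⁰(4m+3) − μᵉ(4m+3) = (−1)^{s₂(m)}. -/
theorem mu_odious_sub_mu_evil_4m_add_3 (m : ℕ) :
    (muOdious (4 * m + 3) : ℤ) - (muEvil (4 * m + 3) : ℤ) = (-1) ^ (s2 m) := by
  induction m with
  | zero =>
    have d1 : Nat.digits 2 1 = [1] := by simp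
    have d2 : Nat.digits 2 2 = [0,1] := by
      rw [Nat.digits_def' (by norm_num : 1 < 2) (by norm_num)]; simp
    norm_num [muOdious, muEvil, Odious, Evil, s2, Finset.range_add_one, Finset.filter_insert,
      d1, d2, Nat.odd_iff, Finset.filter_singleton]
  | succ m ih =>
    have hs3 : s2 (4*m+3) = s2 m + 2 := by
      have h : 4*m+3 = 2*(2*m+1)+1 := by ring
      rw [h, s2_two_mul_add_one, s2_two_mul_add_one]
    have hs5 : s2 (4*m+3+1+1) = s2 (m+1) + 1 := by
      have h : 4*m+3+1+1 = 2*(2*(m+1))+1 := by ring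
      rw [h, s2_two_mul_add_one, s2_two_mul]
    have key : 4*(m+1)+3 = (4*m+3)+1+1+1+1 := by ring
    have o3 : Odd (4*m+3) := ⟨2*m+1, by ring⟩
    have o5 : Odd (4*m+3+1+1) := ⟨2*m+2, by ring⟩
    have e4 : ¬ Odd (4*m+3+1) := by rw [Nat.odd_iff]; omega
    have e6 : ¬ Odd (4*m+3+1+1+1) := by rw [Nat.odd_iff]; omega
    unfold muOdious muEvil at ih ⊢
    rw [key,
      filter_range_succ_card _ (4*m+3+1+1+1), filter_range_succ_card _ (4*m+3+1+1+1),
      filter_range_succ_card _ (4*m+3+1+1), filter_range_succ_card _ (4*m+3+1+1),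
      filter_range_succ_card _ (4*m+3+1), filter_range_succ_card _ (4*m+3+1),
      filter_range_succ_card _ (4*m+3), filter_range_succ_card _ (4*m+3)]
    rcases Nat.even_or_odd (s2 m) with hm | hm <;>
      rcases Nat.even_or_odd (s2 (m+1)) with hm1 | hm1
    all_goals {
      first
      | (have A : ¬ Odious (4*m+3) := by
          unfold Odious; rw [hs3, Nat.odd_iff]; rw [Nat.even_iff] at hm; omega)
      | (have A : Odious (4*m+3) := by
          unfold Odious; rw [hs3, Nat.odd_iff]; rw [Nat.odd_iff] at hm; omega)
      first
      | (have A' : Evil (4*m+3) := by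
          unfold Evil; rw [hs3, Nat.even_iff]; rw [Nat.even_iff] at hm; omega)
      | (have A' : ¬ Evil (4*m+3) := by
          unfold Evil; rw [hs3, Nat.even_iff]; rw [Nat.odd_iff] at hm; omega)
      first
      | (have B : Odious (4*m+3+1+1) := by
          unfold Odious; rw [hs5, Nat.odd_iff]; rw [Nat.even_iff] at hm1; omega)
      | (have B : ¬ Odious (4*m+3+1+1) := by
          unfold Odious; rw [hs5, Nat.odd_iff]; rw [Nat.odd_iff] at hm1; omega)
      first
      | (have B' : ¬ Evil (4*m+3+1+1) := by
          unfold Evil; rw [hs5, Nat.even_iff]; rw [Nat.even_iff] at hm1; omega)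
      | (have B' : Evil (4*m+3+1+1) := by
          unfold Evil; rw [hs5, Nat.even_iff]; rw [Nat.odd_iff] at hm1; omega)
      simp only [o3, o5, e4, e6, A, A', B, B', true_and, false_and, and_true, and_false,
        if_true, if_false, not_false_iff, ite_true, ite_false]
      rw [hm.neg_one_pow] at ih
      rw [hm1.neg_one_pow]
      push_cast at ih ⊢
      omega
    }
end

section
/- For every integer n ≥ 2, Δ^{odd}_{3,2}([0, 2^{2n−1})) = −3^{n−2}, i.e. the number of odd odious integers m < 2^{2n−1} with m ≡ 2 (mod 3) minus the number of odd evil integers m < 2^{2n−1} with m ≡ 2 (mod 3) equals −3^{n−2}. -/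
namespace DeltaAux

def g (m : ℕ) : ℤ := (-1) ^ (s2 m)

lemma s2_eq (m : ℕ) (h : m ≠ 0) : s2 m = m % 2 + s2 (m / 2) := by
  unfold s2
  rw [Nat.digits_def' (by norm_num : 1 < 2) (Nat.pos_of_ne_zero h)]
  simp

lemma g_two_mul (m : ℕ) : g (2 * m) = g m := by
  rcases eq_or_ne m 0 with rfl | h
  · simp
  · unfold g
    rw [s2_eq (2 * m) (by positivity), Nat.mul_mod_right,
      Nat.mul_div_cancel_left _ (by norm_num), zero_add]

lemma g_two_mul_add_one (m : ℕ) : g (2 * m + 1) = -g m := by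
  unfold g
  rw [s2_eq (2 * m + 1) (by omega)]
  have h1 : (2 * m + 1) % 2 = 1 := by omega
  have h2 : (2 * m + 1) / 2 = m := by omega
  rw [h1, h2, add_comm, pow_succ]
  ring

lemma g_add_pow : ∀ k m : ℕ, m < 2 ^ k → g (m + 2 ^ k) = -g m := by
  intro k
  induction k with
  | zero =>
    intro m hm
    interval_cases m
    simp [g, s2]
  | succ k ih =>
    intro m hm
    have hp : 2 ^ (k + 1) = 2 * 2 ^ k := by ring
    have hq : m / 2 < 2 ^ k := by omega
    have hm2 : m + 2 ^ (k + 1) = 2 * (m / 2 + 2 ^ k) + m % 2 := by omega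
    rcases Nat.mod_two_eq_zero_or_one m with h | h
    · have hmeq : m = 2 * (m / 2) := by omega
      rw [hm2, h, add_zero, g_two_mul, ih _ hq]
      conv_rhs => rw [hmeq, g_two_mul]
    · have hmeq : m = 2 * (m / 2) + 1 := by omega
      rw [hm2, h, g_two_mul_add_one, ih _ hq]
      conv_rhs => rw [hmeq, g_two_mul_add_one]

def F (k i : ℕ) : ℤ := ∑ m ∈ Finset.range (2 ^ k), if Odd m ∧ m % 3 = i then g m else 0

lemma F_succ (k i j : ℕ) (hk : 1 ≤ k)
    (h3 : ∀ m : ℕ, (2 ^ k + m) % 3 = i ↔ m % 3 = j) :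
    F (k + 1) i = F k i - F k j := by
  have hpow : 2 ^ (k + 1) = 2 ^ k + 2 ^ k := by ring
  have hmod2 : 2 ^ k % 2 = 0 := by
    have : (2 : ℕ) ∣ 2 ^ k := dvd_pow_self 2 (by omega)
    omega
  unfold F
  rw [hpow, Finset.sum_range_add]
  have key : ∀ m ∈ Finset.range (2 ^ k),
      (if Odd (2 ^ k + m) ∧ (2 ^ k + m) % 3 = i then g (2 ^ k + m) else 0)
        = -(if Odd m ∧ m % 3 = j then g m else 0) := by
    intro m hm
    rw [Finset.mem_range] at hm
    have hodd : Odd (2 ^ k + m) ↔ Odd m := by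
      rw [Nat.odd_iff, Nat.odd_iff]
      omega
    have hg : g (2 ^ k + m) = -g m := by
      rw [add_comm]; exact g_add_pow k m hm
    simp only [hodd, h3 m, hg]
    by_cases hc : Odd m ∧ m % 3 = j <;> simp [hc]
  rw [Finset.sum_congr rfl key, Finset.sum_neg_distrib]
  ring

lemma F_three : F 3 0 = 1 ∧ F 3 1 = -2 ∧ F 3 2 = 1 := by
  have h : ∀ i : ℕ, F 3 i = ∑ m ∈ Finset.range 8, if Odd m ∧ m % 3 = i then g m else 0 := by
    intro i; rfl
  refine ⟨?_, ?_, ?_⟩ <;>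
  · rw [h]
    simp [Finset.sum_range_succ, g, s2, Nat.odd_iff]

lemma pow_two_mod_three_odd (t : ℕ) : 2 ^ (2 * t + 1) % 3 = 2 := by
  induction t with
  | zero => rfl
  | succ t ih =>
    have : 2 ^ (2 * (t + 1) + 1) = 4 * 2 ^ (2 * t + 1) := by ring
    omega

lemma pow_two_mod_three_even (t : ℕ) : 2 ^ (2 * t) % 3 = 1 := by
  induction t with
  | zero => rfl
  | succ t ih =>
    have : 2 ^ (2 * (t + 1)) = 4 * 2 ^ (2 * t) := by ring
    omega

lemma key_induction : ∀ j : ℕ,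
    F (2 * j + 3) 0 = 3 ^ j ∧ F (2 * j + 3) 1 = -2 * 3 ^ j ∧ F (2 * j + 3) 2 = 3 ^ j := by
  intro j
  induction j with
  | zero => simpa using F_three
  | succ j ih =>
    obtain ⟨hA, hB, hC⟩ := ih
    set k := 2 * j + 3 with hk
    have hkmod : 2 ^ k % 3 = 2 := pow_two_mod_three_odd (j + 1)
    have hk1mod : 2 ^ (k + 1) % 3 = 1 := pow_two_mod_three_even (j + 2)
    have e0 : F (k + 1) 0 = F k 0 - F k 1 :=
      F_succ k 0 1 (by omega) (fun m => by omega)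
    have e1 : F (k + 1) 1 = F k 1 - F k 2 :=
      F_succ k 1 2 (by omega) (fun m => by omega)
    have e2 : F (k + 1) 2 = F k 2 - F k 0 :=
      F_succ k 2 0 (by omega) (fun m => by omega)
    have f0 : F (k + 2) 0 = F (k + 1) 0 - F (k + 1) 2 :=
      F_succ (k + 1) 0 2 (by omega) (fun m => by omega)
    have f1 : F (k + 2) 1 = F (k + 1) 1 - F (k + 1) 0 :=
      F_succ (k + 1) 1 0 (by omega) (fun m => by omega)
    have f2 : F (k + 2) 2 = F (k + 1) 2 - F (k + 1) 1 :=
      F_succ (k + 1) 2 1 (by omega) (fun m => by omega)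
    have hkk : 2 * (j + 1) + 3 = k + 2 := by omega
    rw [hkk]
    refine ⟨?_, ?_, ?_⟩
    · rw [f0, e0, e2, hA, hB, hC, pow_succ]; ring
    · rw [f1, e1, e0, hA, hB, hC, pow_succ]; ring
    · rw [f2, e2, e1, hA, hB, hC, pow_succ]; ring

lemma deltaOdd3_eq_neg_sum (i N : ℕ) :
    deltaOdd3 i N = -∑ m ∈ Finset.range N, if Odd m ∧ m % 3 = i then g m else 0 := by
  unfold deltaOdd3
  rw [Finset.card_filter, Finset.card_filter]
  push_cast
  rw [← Finset.sum_sub_distrib, ← Finset.sum_neg_distrib]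
  refine Finset.sum_congr rfl fun m _ => ?_
  by_cases h1 : Odd m
  · by_cases h2 : m % 3 = i
    · rcases Nat.even_or_odd (s2 m) with he | ho
      · have hno : ¬ Odious m := Nat.not_odd_iff_even.mpr he
        have hg : g m = 1 := he.neg_one_pow
        simp [h1, h2, hno, Evil, he, hg, g]
      · have hnE : ¬ Evil m := Nat.not_even_iff_odd.mpr ho
        have hg : g m = -1 := ho.neg_one_pow
        simp [h1, h2, hnE, Odious, ho, hg, g]
    · simp [h1, h2]
  · simp [h1]

end DeltaAux

/-- For every integer `n ≥ 2`, Δ^{odd}_{3,2}([0, 2^{2n−1})) = −3^{n−2}. -/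
theorem deltaOdd3_two_pow_odd (n : ℕ) (hn : 2 ≤ n) :
    deltaOdd3 2 (2 ^ (2 * n - 1)) = -(3 ^ (n - 2) : ℤ) := by
  obtain ⟨j, rfl⟩ : ∃ j, n = j + 2 := ⟨n - 2, by omega⟩
  have hexp : 2 * (j + 2) - 1 = 2 * j + 3 := by omega
  have h := (DeltaAux.key_induction j).2.2
  rw [hexp, DeltaAux.deltaOdd3_eq_neg_sum]
  have : (∑ m ∈ Finset.range (2 ^ (2 * j + 3)),
      if Odd m ∧ m % 3 = 2 then DeltaAux.g m else 0) = (3 : ℤ) ^ j := h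
  rw [this]
  norm_num
end
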